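/- arXiv:1707.08086 — 7 statements merged into one kernel-verified Lean document; each statement's English description precedes it below -/
import Mathlib

section
/- The function t ↦ Q(t)^{1/t²} is strictly increasing on (0,∞); equivalently, for all reals 0 < s < t one has (log Q(s))/s² < (log Q(t))/t². -/
open MeasureTheory ProbabilityTheory Real

/-- Standard Gaussian upper tail probability. -/
noncomputable def Q (t : ℝ) : ℝ := ((gaussianReal 0 1) (Set.Ioi t)).toReal

/-!
Write `φ` for the standard Gaussian density and `F t = log (Q t) / t ^ 2`; then
`t ^ 3 * F' t = -(t * φ t / Q t) - 2 * log (Q t)`. The Mills-ratio lower bound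
`t * φ t / (t ^ 2 + 1) < Q t` makes the first term exceed `-(t ^ 2 + 1)`. The upper bound
`Q t < φ t / t` makes `Q t * exp (t ^ 2 / 2)` decreasing, so it stays below its value `1 / 2`
at `0`, and the second term exceeds `t ^ 2 + 2 * log 2`. Since `2 * log 2 > 1`, `F' > 0` on
`(0, ∞)`. Both Mills bounds hold because the difference of their two sides has negative
derivative and tends to `0` at infinity.
-/

open Set Filter Topology

noncomputable def stdGaussianPDF (x : ℝ) : ℝ := (√(2 * π))⁻¹ * exp (-x ^ 2 / 2)

lemma gaussianPDFReal_zero_one : gaussianPDFReal 0 1 = stdGaussianPDF := by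
  funext x
  simp [gaussianPDFReal, stdGaussianPDF]

lemma stdGaussianPDF_pos (x : ℝ) : 0 < stdGaussianPDF x := by
  unfold stdGaussianPDF
  positivity

lemma continuous_stdGaussianPDF : Continuous stdGaussianPDF := by
  unfold stdGaussianPDF
  fun_prop

lemma integrable_stdGaussianPDF : Integrable stdGaussianPDF :=
  gaussianPDFReal_zero_one ▸ integrable_gaussianPDFReal 0 1

lemma hasDerivAt_stdGaussianPDF (x : ℝ) :
    HasDerivAt stdGaussianPDF (-x * stdGaussianPDF x) x := by
  have h : HasDerivAt (fun y : ℝ => -y ^ 2 / 2) (-x) x :=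
    ((hasDerivAt_pow 2 x).fun_neg.div_const 2).congr_deriv (by ring)
  exact (h.exp.const_mul _).congr_deriv (by unfold stdGaussianPDF; ring)

lemma tendsto_stdGaussianPDF_atTop : Tendsto stdGaussianPDF atTop (𝓝 0) := by
  have h : Tendsto (fun x : ℝ => -x ^ 2 / 2) atTop atBot :=
    (tendsto_neg_atTop_atBot.comp (tendsto_pow_atTop two_ne_zero)).atBot_div_const two_pos
  have := (tendsto_exp_atBot.comp h).const_mul (√(2 * π))⁻¹
  rwa [mul_zero] at this

lemma Q_eq_integral (t : ℝ) : Q t = ∫ x in Ioi t, stdGaussianPDF x := by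
  rw [Q, gaussianReal_apply_eq_integral 0 one_ne_zero, gaussianPDFReal_zero_one,
    ENNReal.toReal_ofReal
      (setIntegral_nonneg measurableSet_Ioi fun x _ => (stdGaussianPDF_pos x).le)]

lemma Q_pos (t : ℝ) : 0 < Q t := by
  rw [Q_eq_integral, setIntegral_pos_iff_support_of_nonneg_ae
    (.of_forall fun x => (stdGaussianPDF_pos x).le) integrable_stdGaussianPDF.integrableOn,
    Function.support_eq_univ fun x => (stdGaussianPDF_pos x).ne', univ_inter]
  simp

lemma hasDerivAt_Q (t : ℝ) : HasDerivAt Q (-stdGaussianPDF t) t := by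
  have hQ : Q = fun u => Q 0 - ∫ x in (0 : ℝ)..u, stdGaussianPDF x := by
    funext u
    rw [Q_eq_integral, Q_eq_integral, ← intervalIntegral.integral_Ioi_sub_Ioi'
      integrable_stdGaussianPDF.integrableOn integrable_stdGaussianPDF.integrableOn, sub_sub_cancel]
  rw [hQ]
  exact (intervalIntegral.integral_hasDerivAt_right integrable_stdGaussianPDF.intervalIntegrable
    (continuous_stdGaussianPDF.stronglyMeasurableAtFilter _ _)
    continuous_stdGaussianPDF.continuousAt).const_sub _

lemma tendsto_Q_atTop : Tendsto Q atTop (𝓝 0) := by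
  have hQ : Q = fun t => 1 - cdf (gaussianReal 0 1) t := by
    funext t
    rw [cdf_eq_real, ← probReal_compl_eq_one_sub measurableSet_Iic, compl_Iic]
    rfl
  rw [hQ, ← sub_self 1]
  exact (tendsto_cdf_atTop _).const_sub 1

lemma Q_zero : Q 0 = 1 / 2 := by
  have hneg : (gaussianReal 0 1).map (fun x => -x) = gaussianReal 0 1 := by
    simpa using gaussianReal_map_neg (μ := 0) (v := 1)
  have hsymm : Q 0 = (gaussianReal 0 1).real (Iio 0) := by
    rw [Q, ← measureReal_def]
    conv_lhs => rw [← hneg]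
    rw [map_measureReal_apply measurable_neg measurableSet_Ioi]
    simp
  have := nullSingletonClass_gaussianReal (μ := 0) one_ne_zero
  have hcompl : Q 0 = 1 - (gaussianReal 0 1).real (Iic 0) := by
    rw [← probReal_compl_eq_one_sub measurableSet_Iic, compl_Iic]
    rfl
  rw [measureReal_congr Iio_ae_eq_Iic] at hsymm
  linarith

lemma pos_of_hasDerivAt_neg_of_tendsto_zero {f f' : ℝ → ℝ} {a : ℝ}
    (hf : ∀ x ≥ a, HasDerivAt f (f' x) x) (hf' : ∀ x > a, f' x < 0)
    (hlim : Tendsto f atTop (𝓝 0)) : 0 < f a := by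
  have hanti : StrictAntiOn f (Ici a) := by
    refine strictAntiOn_of_hasDerivWithinAt_neg (f' := f') (convex_Ici a)
      (fun x hx => (hf x hx).continuousAt.continuousWithinAt) (fun x hx => ?_) (fun x hx => ?_)
    · rw [interior_Ici] at hx ⊢
      exact (hf x (le_of_lt hx)).hasDerivWithinAt
    · rw [interior_Ici] at hx
      exact hf' x hx
  have hnonneg : 0 ≤ f (a + 1) :=
    le_of_tendsto hlim (eventually_ge_atTop (a + 1) |>.mono fun x hx =>
      hanti.antitoneOn (by simp) (by simp at hx ⊢; linarith) hx)
  exact hnonneg.trans_lt (hanti self_mem_Ici (by simp) (by linarith))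

lemma Q_lt_stdGaussianPDF_div {t : ℝ} (ht : 0 < t) : Q t < stdGaussianPDF t / t := by
  suffices 0 < stdGaussianPDF t / t - Q t by linarith
  refine pos_of_hasDerivAt_neg_of_tendsto_zero (f := fun x => stdGaussianPDF x / x - Q x)
    (f' := fun x => -stdGaussianPDF x / x ^ 2) (fun x hx => ?_) (fun x hx => ?_) ?_
  · have hx0 : x ≠ 0 := (ht.trans_le hx).ne'
    refine (((hasDerivAt_stdGaussianPDF x).div (hasDerivAt_id x) hx0).sub
      (hasDerivAt_Q x)).congr_deriv ?_
    simp only [id]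
    field_simp
    ring
  · have := stdGaussianPDF_pos x
    have : 0 < x := ht.trans hx
    simp only [neg_div, neg_lt_zero]
    positivity
  · simpa [div_eq_mul_inv] using
      (tendsto_stdGaussianPDF_atTop.mul tendsto_inv_atTop_zero).sub tendsto_Q_atTop

lemma mul_stdGaussianPDF_div_lt_Q (t : ℝ) : t * stdGaussianPDF t / (t ^ 2 + 1) < Q t := by
  suffices 0 < Q t - t * stdGaussianPDF t / (t ^ 2 + 1) by linarith
  refine pos_of_hasDerivAt_neg_of_tendsto_zero
    (f := fun x => Q x - x * stdGaussianPDF x / (x ^ 2 + 1))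
    (f' := fun x => -2 * stdGaussianPDF x / (x ^ 2 + 1) ^ 2) (fun x _ => ?_) (fun x _ => ?_) ?_
  · have h := (hasDerivAt_Q x).sub
      (((hasDerivAt_id x).mul (hasDerivAt_stdGaussianPDF x)).div
        ((hasDerivAt_pow 2 x).add_const 1) (by positivity))
    refine h.congr_deriv ?_
    simp only [id, Pi.mul_apply]
    field_simp
    ring
  · have := stdGaussianPDF_pos x
    have : 0 < (x ^ 2 + 1) ^ 2 := by positivity
    rw [neg_mul, neg_div, neg_lt_zero]
    positivity
  · have hsmall : Tendsto (fun x => x * stdGaussianPDF x / (x ^ 2 + 1)) atTop (𝓝 0) := by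
      refine squeeze_zero' ?_ ?_ tendsto_stdGaussianPDF_atTop
      · filter_upwards [eventually_ge_atTop 0] with x hx
        have := stdGaussianPDF_pos x
        positivity
      · filter_upwards [eventually_ge_atTop 0] with x hx
        rw [div_le_iff₀ (by positivity)]
        nlinarith [stdGaussianPDF_pos x, sq_nonneg (x - 1)]
    simpa using tendsto_Q_atTop.sub hsmall

lemma Q_mul_exp_lt_half {t : ℝ} (ht : 0 < t) : Q t * exp (t ^ 2 / 2) < 1 / 2 := by
  have hw : ∀ x, HasDerivAt (fun y => Q y * exp (y ^ 2 / 2))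
      (exp (x ^ 2 / 2) * (x * Q x - stdGaussianPDF x)) x := fun x =>
    ((hasDerivAt_Q x).mul ((hasDerivAt_pow 2 x).div_const 2).exp).congr_deriv (by ring)
  have hanti : StrictAntiOn (fun y => Q y * exp (y ^ 2 / 2)) (Ici 0) := by
    refine strictAntiOn_of_hasDerivWithinAt_neg (convex_Ici 0)
      (fun x _ => (hw x).continuousAt.continuousWithinAt) (fun x _ => (hw x).hasDerivWithinAt)
      (fun x hx => ?_)
    rw [interior_Ici] at hx
    have := (lt_div_iff₀ hx).mp (Q_lt_stdGaussianPDF_div hx)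
    exact mul_neg_of_pos_of_neg (exp_pos _) (by linarith)
  simpa [Q_zero] using hanti self_mem_Ici ht.le ht

lemma hasDerivAt_log_Q_div_sq {t : ℝ} (ht : t ≠ 0) :
    HasDerivAt (fun u => log (Q u) / u ^ 2)
      ((-(t * stdGaussianPDF t / Q t) - 2 * log (Q t)) / t ^ 3) t := by
  refine (((hasDerivAt_Q t).log (Q_pos t).ne').div (hasDerivAt_pow 2 t)
    (pow_ne_zero 2 ht)).congr_deriv ?_
  field_simp
  ring

lemma strictMonoOn_log_Q_div_sq : StrictMonoOn (fun t => log (Q t) / t ^ 2) (Ioi 0) := by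
  refine strictMonoOn_of_hasDerivWithinAt_pos (convex_Ioi 0)
    (f' := fun t => (-(t * stdGaussianPDF t / Q t) - 2 * log (Q t)) / t ^ 3)
    (fun t ht => (hasDerivAt_log_Q_div_sq (ne_of_gt ht)).continuousAt.continuousWithinAt)
    (fun t ht => ?_) (fun t ht => ?_)
  · rw [interior_Ioi] at ht ⊢
    exact (hasDerivAt_log_Q_div_sq (ne_of_gt ht)).hasDerivWithinAt
  rw [interior_Ioi] at ht
  have hmills : t * stdGaussianPDF t / Q t < t ^ 2 + 1 := by
    rw [div_lt_iff₀ (Q_pos t), ← div_lt_iff₀' (by positivity)]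
    exact mul_stdGaussianPDF_div_lt_Q t
  have hlog : log (Q t) + t ^ 2 / 2 < -log 2 := by
    have h := log_lt_log (mul_pos (Q_pos t) (exp_pos _)) (Q_mul_exp_lt_half ht)
    rwa [log_mul (Q_pos t).ne' (exp_pos _).ne', log_exp, one_div, log_inv] at h
  have := log_two_gt_d9
  exact div_pos (by linarith) (pow_pos ht 3)

theorem Q_rpow_one_div_sq_strictMono :
    StrictMonoOn (fun t : ℝ => Q t ^ (1 / t ^ 2)) (Set.Ioi 0) ∧
    ∀ s t : ℝ, 0 < s → s < t → Real.log (Q s) / s ^ 2 < Real.log (Q t) / t ^ 2 := by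
  have hrpow : ∀ t, Q t ^ (1 / t ^ 2) = exp (log (Q t) / t ^ 2) := fun t => by
    rw [rpow_def_of_pos (Q_pos t), mul_one_div]
  refine ⟨fun s hs t ht hst => ?_,
    fun s t hs hst => strictMonoOn_log_Q_div_sq hs (hs.trans hst) hst⟩
  simp only [hrpow]
  exact exp_lt_exp.mpr (strictMonoOn_log_Q_div_sq hs ht hst)
end

section
/- Let ρ ∈ [0,1], t ≥ 0 and δ ≥ 0, and set φ = ρ + δ·√(1−ρ²). Let X and Z be independent standard Gaussian random variables and Y = ρ·X + √(1−ρ²)·Z. Then the bivariate orthant probability satisfies P(X > t and Y > φ·t) ≥ Q(t)·Q(δ·t). -/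
/-!
Since `ρ ≥ 0` and `√(1 - ρ²) ≥ 0` are not both zero, `X > t` and `Z > δ t` force
`Y = ρ X + √(1 - ρ²) Z > ρ t + √(1 - ρ²) δ t`. The orthant therefore contains the rectangle
`{X > t} ∩ {Z > δ t}`, whose probability is `Q t * Q (δ t)` by independence.
-/

open MeasureTheory ProbabilityTheory Real

lemma add_mul_lt_add_mul_of_lt_of_lt {R : Type*} [Field R] [LinearOrder R] [IsStrictOrderedRing R]
    {a b x x' y y' : R} (ha : 0 ≤ a) (hb : 0 ≤ b)
    (hab : 0 < a + b) (hx : x < x') (hy : y < y') : a * x + b * y < a * x' + b * y' := by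
  rcases ha.lt_or_eq with ha | rfl
  · nlinarith [mul_le_mul_of_nonneg_left hy.le hb]
  · simpa using mul_lt_mul_of_pos_left hy (by simpa using hab)

lemma add_sqrt_one_sub_sq_pos {ρ : ℝ} (hρ : 0 ≤ ρ) : 0 < ρ + √(1 - ρ ^ 2) := by
  rcases hρ.lt_or_eq with hρ | rfl
  · positivity
  · simp

lemma ProbabilityTheory.IndepFun.measure_preimage_inter_preimage_eq_map_mul_map {Ω α β : Type*}
    [MeasurableSpace Ω] [MeasurableSpace α] [MeasurableSpace β] {P : Measure Ω}
    {X : Ω → α} {Z : Ω → β} (hindep : IndepFun X Z P) (hX : AEMeasurable X P)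
    (hZ : AEMeasurable Z P) {A : Set α} {B : Set β} (hA : MeasurableSet A)
    (hB : MeasurableSet B) :
    P (X ⁻¹' A ∩ Z ⁻¹' B) = P.map X A * P.map Z B := by
  rw [hindep.measure_inter_preimage_eq_mul _ _ hA hB, Measure.map_apply_of_aemeasurable hX hA,
    Measure.map_apply_of_aemeasurable hZ hB]

theorem bivariate_orthant_lower_bound_general
    {Ω : Type*} [MeasurableSpace Ω] (P : Measure Ω) [IsProbabilityMeasure P]
    (X Z : Ω → ℝ)
    (hXlaw : P.map X = gaussianReal 0 1) (hZlaw : P.map Z = gaussianReal 0 1)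
    (hindep : IndepFun X Z P)
    (ρ t δ : ℝ) (hρ0 : 0 ≤ ρ)
    (Y : Ω → ℝ) (hY : ∀ ω, Y ω = ρ * X ω + Real.sqrt (1 - ρ ^ 2) * Z ω) :
    Q t * Q (δ * t) ≤
      (P {ω | t < X ω ∧ (ρ + δ * Real.sqrt (1 - ρ ^ 2)) * t < Y ω}).toReal := by
  have hXm : AEMeasurable X P := aemeasurable_of_map_neZero (hXlaw ▸ inferInstance)
  have hZm : AEMeasurable Z P := aemeasurable_of_map_neZero (hZlaw ▸ inferInstance)
  have hrect : X ⁻¹' Set.Ioi t ∩ Z ⁻¹' Set.Ioi (δ * t) ⊆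
      {ω | t < X ω ∧ (ρ + δ * √(1 - ρ ^ 2)) * t < Y ω} := by
    rintro ω ⟨hXω, hZω⟩
    refine ⟨hXω, ?_⟩
    rw [hY ω, show (ρ + δ * √(1 - ρ ^ 2)) * t = ρ * t + √(1 - ρ ^ 2) * (δ * t) by ring]
    exact add_mul_lt_add_mul_of_lt_of_lt hρ0 (sqrt_nonneg _) (add_sqrt_one_sub_sq_pos hρ0)
      hXω hZω
  calc Q t * Q (δ * t)
      = (P (X ⁻¹' Set.Ioi t ∩ Z ⁻¹' Set.Ioi (δ * t))).toReal := by
        rw [hindep.measure_preimage_inter_preimage_eq_map_mul_map hXm hZm measurableSet_Ioi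
          measurableSet_Ioi, hXlaw, hZlaw, ENNReal.toReal_mul, Q, Q]
    _ ≤ _ := ENNReal.toReal_mono (measure_ne_top _ _) (measure_mono hrect)

theorem bivariate_orthant_lower_bound
    {Ω : Type*} [MeasurableSpace Ω] (P : Measure Ω) [IsProbabilityMeasure P]
    (X Z : Ω → ℝ)
    (hXlaw : P.map X = gaussianReal 0 1) (hZlaw : P.map Z = gaussianReal 0 1)
    (hindep : IndepFun X Z P)
    (ρ t δ : ℝ) (hρ0 : 0 ≤ ρ) (hρ1 : ρ ≤ 1) (ht : 0 ≤ t) (hδ : 0 ≤ δ)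
    (Y : Ω → ℝ) (hY : ∀ ω, Y ω = ρ * X ω + Real.sqrt (1 - ρ ^ 2) * Z ω) :
    Q t * Q (δ * t) ≤
      (P {ω | t < X ω ∧ (ρ + δ * Real.sqrt (1 - ρ ^ 2)) * t < Y ω}).toReal :=
  bivariate_orthant_lower_bound_general P X Z hXlaw hZlaw hindep ρ t δ hρ0 Y hY
end

section
/- (Agreement guarantee of the template one-way common randomness scheme.) Let (Ω, P) be a probability space, n ≥ 1, and X, Y : Ω → ℝⁿ random vectors. Let C be a finite nonempty set of vectors in ℝⁿ, t, s ∈ ℝ, c ∈ ℕ, and χ : C → Fin 2^c a coloring such that for every v ∈ C the number of w ∈ C with w ≠ v and χ(w) = χ(v) is at most |C|·2^{−c}. For v ∈ C let A_v denote the event {⟨v,X⟩ > t and ⟨v,Y⟩ > s}. Assume that for all distinct v, w ∈ C: P({⟨w,X⟩ > t} ∩ A_v) ≤ P(A_v)/(4|C|) and P({⟨w,Y⟩ > s} ∩ A_v) ≤ 2^c · P(A_v)/(4|C|). For v ∈ C let E_v denote the event that A_v holds, ⟨w,X⟩ ≤ t for every w ∈ C with w ≠ v, and ⟨w,Y⟩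 ≤ s for every w ∈ C with w ≠ v and χ(w) = χ(v). Then the events E_v are pairwise disjoint and P(⋃_{v∈C} E_v) ≥ (1/2)·Σ_{v∈C} P(A_v) ≥ (1/2)·|C|·min_{v∈C} P(A_v). -/
open MeasureTheory ProbabilityTheory Real
open scoped Classical

/-!
Inside `A v`, the event `E v` fails only if `⟨w, X⟩ > t` for some `w ≠ v`, or `⟨w, Y⟩ > s`
for some `w ≠ v` of the colour of `v`. By the union bound, the first kind costs at most
`|C| · P(A v) / (4|C|)` and the second at most `(|C| / 2^c) · 2^c P(A v) / (4|C|)`, so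
`P(E v) ≥ P(A v) / 2`. On `E w` every `⟨v, X⟩` with `v ≠ w` is `≤ t`, whereas `⟨v, X⟩ > t`
on `E v`; hence the `E v` are disjoint and their probabilities add up.
-/

theorem Finset.sum_le_of_card_le_div {ι : Type*} {S : Finset ι} {f : ι → ℝ} {N K x : ℝ}
    (hN : 0 ≤ N) (hK : 0 ≤ K) (hx : 0 ≤ x) (hS : (S.card : ℝ) ≤ N / K)
    (hf : ∀ w ∈ S, f w ≤ K * x / N) :
    ∑ w ∈ S, f w ≤ x :=
  calc ∑ w ∈ S, f w ≤ S.card • (K * x / N) := Finset.sum_le_card_nsmul _ _ _ hf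
    _ ≤ N / K * (K * x / N) := by rw [nsmul_eq_mul]; gcongr
    _ = N / N * (K / K) * x := by ring
    _ ≤ x := mul_le_of_le_one_left hx
      (mul_le_one₀ (div_self_le_one N) (by positivity) (div_self_le_one K))

namespace MeasureTheory

variable {Ω ι : Type*} [MeasurableSpace Ω] {μ : Measure Ω} [IsFiniteMeasure μ]

theorem measureReal_le_add_sum_add_sum {A E : Set Ω} {S T : Finset ι} {F G : ι → Set Ω}
    (h : A ⊆ E ∪ (⋃ w ∈ S, F w) ∪ ⋃ w ∈ T, G w) :
    μ.real A ≤ μ.real E + ∑ w ∈ S, μ.real (F w) + ∑ w ∈ T, μ.real (G w) :=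
  calc μ.real A ≤ μ.real (E ∪ (⋃ w ∈ S, F w) ∪ ⋃ w ∈ T, G w) := measureReal_mono h
    _ ≤ μ.real E + μ.real (⋃ w ∈ S, F w) + μ.real (⋃ w ∈ T, G w) := by
      grw [measureReal_union_le, measureReal_union_le]
    _ ≤ _ := by gcongr <;> exact measureReal_biUnion_finset_le _ _

end MeasureTheory

namespace TemplateScheme

variable {Ω ι κ : Type*}

def jointExceed (a b : ι → Ω → ℝ) (t s : ℝ) (v : ι) : Set Ω :=
  {ω | t < a v ω ∧ s < b v ω}

def uniqueExceed (C : Finset ι) (χ : ι → κ) (a b : ι → Ω → ℝ) (t s : ℝ) (v : ι) : Set Ω :=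
  jointExceed a b t s v ∩ {ω | ∀ w ∈ C, w ≠ v → a w ω ≤ t}
    ∩ {ω | ∀ w ∈ C, w ≠ v → χ w = χ v → b w ω ≤ s}

theorem pairwiseDisjoint_uniqueExceed (C : Finset ι) (χ : ι → κ) (a b : ι → Ω → ℝ) (t s : ℝ) :
    (C : Set ι).PairwiseDisjoint (uniqueExceed C χ a b t s) :=
  fun v hv _ _ hvw => Set.disjoint_left.mpr fun _ hωv hωw =>
    (hωw.1.2 v hv hvw).not_gt hωv.1.1.1

theorem measurableSet_uniqueExceed [MeasurableSpace Ω] (C : Finset ι) (χ : ι → κ)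
    {a b : ι → Ω → ℝ} (ha : ∀ w, Measurable (a w)) (hb : ∀ w, Measurable (b w)) (t s : ℝ)
    (v : ι) : MeasurableSet (uniqueExceed C χ a b t s v) := by
  have hX : {ω | ∀ w ∈ C, w ≠ v → a w ω ≤ t} = ⋂ w ∈ C, ⋂ _ : w ≠ v, {ω | a w ω ≤ t} := by
    ext; simp
  have hY : {ω | ∀ w ∈ C, w ≠ v → χ w = χ v → b w ω ≤ s} =
      ⋂ w ∈ C, ⋂ _ : w ≠ v, ⋂ _ : χ w = χ v, {ω | b w ω ≤ s} := by
    ext; simp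
  rw [uniqueExceed, hX, hY]
  refine .inter (.inter ?_ ?_) ?_
  · exact (measurableSet_lt measurable_const (ha v)).inter
      (measurableSet_lt measurable_const (hb v))
  · exact .biInter C.countable_toSet fun w _ => .iInter fun _ =>
      measurableSet_le (ha w) measurable_const
  · exact .biInter C.countable_toSet fun w _ => .iInter fun _ => .iInter fun _ =>
      measurableSet_le (hb w) measurable_const

theorem measureReal_jointExceed_le_two_mul [MeasurableSpace Ω] {μ : Measure Ω}
    [IsFiniteMeasure μ] [DecidableEq ι] [DecidableEq κ] {C : Finset ι} {χ : ι → κ}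
    {a b : ι → Ω → ℝ} {t s K : ℝ} {v : ι} (hK : 0 ≤ K)
    (hχ : (({w ∈ C | w ≠ v ∧ χ w = χ v} : Finset ι).card : ℝ) ≤ C.card / K)
    (hTA : ∀ w ∈ C, w ≠ v → μ.real ({ω | t < a w ω} ∩ jointExceed a b t s v) ≤
      μ.real (jointExceed a b t s v) / (4 * C.card))
    (hTB : ∀ w ∈ C, w ≠ v → μ.real ({ω | s < b w ω} ∩ jointExceed a b t s v) ≤
      K * μ.real (jointExceed a b t s v) / (4 * C.card)) :
    μ.real (jointExceed a b t s v) ≤ 2 * μ.real (uniqueExceed C χ a b t s v) := by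
  set J := jointExceed a b t s v
  have hcover : J ⊆ uniqueExceed C χ a b t s v
      ∪ (⋃ w ∈ {w ∈ C | w ≠ v}, {ω | t < a w ω} ∩ J)
      ∪ ⋃ w ∈ {w ∈ C | w ≠ v ∧ χ w = χ v}, {ω | s < b w ω} ∩ J := by
    intro ω hω
    by_contra h
    simp only [Set.mem_union, Set.mem_iUnion, Finset.mem_filter, Set.mem_inter_iff, not_or,
      not_exists, not_and] at h
    exact h.1.1 ⟨⟨hω, fun w hw hwv => le_of_not_gt fun hlt => h.1.2 w ⟨hw, hwv⟩ hlt hω⟩,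
      fun w hw hwv hχw => le_of_not_gt fun hlt => h.2 w ⟨hw, hwv, hχw⟩ hlt hω⟩
  have hX : ∑ w ∈ C with w ≠ v, μ.real ({ω | t < a w ω} ∩ J) ≤ μ.real J / 4 :=
    Finset.sum_le_of_card_le_div (N := C.card) (K := 1) (by positivity) zero_le_one (by positivity)
      (by rw [div_one]; exact_mod_cast Finset.card_filter_le _ _) fun w hw =>
        (hTA w (Finset.mem_filter.mp hw).1 (Finset.mem_filter.mp hw).2).trans_eq (by ring)
  have hY : ∑ w ∈ C with w ≠ v ∧ χ w = χ v, μ.real ({ω | s < b w ω} ∩ J) ≤ μ.real J / 4 :=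
    Finset.sum_le_of_card_le_div (by positivity) hK (by positivity) hχ fun w hw =>
      (hTB w (Finset.mem_filter.mp hw).1 (Finset.mem_filter.mp hw).2.1).trans_eq (by ring)
  linarith [measureReal_le_add_sum_add_sum (μ := μ) hcover]

end TemplateScheme

open TemplateScheme

theorem template_agreement_general
    {Ω : Type*} [MeasurableSpace Ω] (P : Measure Ω) [IsProbabilityMeasure P]
    (n : ℕ) (X Y : Ω → Fin n → ℝ)
    (hXm : Measurable X) (hYm : Measurable Y)
    (C : Finset (Fin n → ℝ)) (hC : C.Nonempty)
    (t s : ℝ) (c : ℕ) (χ : (Fin n → ℝ) → Fin (2 ^ c))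
    (hχ : ∀ v ∈ C, (({w ∈ C | w ≠ v ∧ χ w = χ v} : Finset (Fin n → ℝ)).card : ℝ) ≤
      (C.card : ℝ) / 2 ^ c)
    (A E : (Fin n → ℝ) → Set Ω)
    (hA : ∀ v, A v = {ω | t < ∑ i, v i * X ω i ∧ s < ∑ i, v i * Y ω i})
    (hTA : ∀ v ∈ C, ∀ w ∈ C, w ≠ v →
      (P ({ω | t < ∑ i, w i * X ω i} ∩ A v)).toReal ≤ (P (A v)).toReal / (4 * C.card))
    (hTB : ∀ v ∈ C, ∀ w ∈ C, w ≠ v →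
      (P ({ω | s < ∑ i, w i * Y ω i} ∩ A v)).toReal ≤
        2 ^ c * (P (A v)).toReal / (4 * C.card))
    (hE : ∀ v, E v = A v ∩ {ω | ∀ w ∈ C, w ≠ v → ∑ i, w i * X ω i ≤ t}
        ∩ {ω | ∀ w ∈ C, w ≠ v → χ w = χ v → ∑ i, w i * Y ω i ≤ s}) :
    (∀ v ∈ C, ∀ w ∈ C, v ≠ w → Disjoint (E v) (E w)) ∧
    (1 / 2) * ∑ v ∈ C, (P (A v)).toReal ≤ (P (⋃ v ∈ C, E v)).toReal ∧
    (1 / 2) * C.card * (C.inf' hC fun v => (P (A v)).toReal) ≤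
      (1 / 2) * ∑ v ∈ C, (P (A v)).toReal := by
  set a : (Fin n → ℝ) → Ω → ℝ := fun v ω => ∑ i, v i * X ω i
  set b : (Fin n → ℝ) → Ω → ℝ := fun v ω => ∑ i, v i * Y ω i
  obtain rfl : A = jointExceed a b t s := funext hA
  obtain rfl : E = uniqueExceed C χ a b t s := funext hE
  have hdisj := pairwiseDisjoint_uniqueExceed C χ a b t s
  have hmeas : ∀ v, MeasurableSet (uniqueExceed C χ a b t s v) :=
    measurableSet_uniqueExceed C χ (fun _ => by fun_prop) (fun _ => by fun_prop) t s
  refine ⟨fun v hv w hw => hdisj hv hw, ?_, ?_⟩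
  · have hhalf : ∀ v ∈ C, P.real (jointExceed a b t s v) / 2 ≤
        P.real (uniqueExceed C χ a b t s v) := fun v hv => by
      linarith [measureReal_jointExceed_le_two_mul (by positivity) (hχ v hv) (hTA v hv)
        (hTB v hv)]
    calc (1 / 2) * ∑ v ∈ C, P.real (jointExceed a b t s v)
        = ∑ v ∈ C, P.real (jointExceed a b t s v) / 2 := by rw [Finset.mul_sum]; ring_nf
      _ ≤ ∑ v ∈ C, P.real (uniqueExceed C χ a b t s v) := Finset.sum_le_sum hhalf
      _ = P.real (⋃ v ∈ C, uniqueExceed C χ a b t s v) :=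
          (measureReal_biUnion_finset hdisj fun v _ => hmeas v).symm
  · rw [mul_assoc, ← nsmul_eq_mul]
    gcongr
    exact Finset.card_nsmul_le_sum _ _ _ fun v hv => Finset.inf'_le _ hv

theorem template_agreement
    {Ω : Type*} [MeasurableSpace Ω] (P : Measure Ω) [IsProbabilityMeasure P]
    (n : ℕ) (hn : 1 ≤ n) (X Y : Ω → Fin n → ℝ)
    (hXm : Measurable X) (hYm : Measurable Y)
    (C : Finset (Fin n → ℝ)) (hC : C.Nonempty)
    (t s : ℝ) (c : ℕ) (χ : (Fin n → ℝ) → Fin (2 ^ c))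
    (hχ : ∀ v ∈ C, (({w ∈ C | w ≠ v ∧ χ w = χ v} : Finset (Fin n → ℝ)).card : ℝ) ≤
      (C.card : ℝ) / 2 ^ c)
    (A E : (Fin n → ℝ) → Set Ω)
    (hA : ∀ v, A v = {ω | t < ∑ i, v i * X ω i ∧ s < ∑ i, v i * Y ω i})
    (hTA : ∀ v ∈ C, ∀ w ∈ C, w ≠ v →
      (P ({ω | t < ∑ i, w i * X ω i} ∩ A v)).toReal ≤ (P (A v)).toReal / (4 * C.card))
    (hTB : ∀ v ∈ C, ∀ w ∈ C, w ≠ v →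
      (P ({ω | s < ∑ i, w i * Y ω i} ∩ A v)).toReal ≤
        2 ^ c * (P (A v)).toReal / (4 * C.card))
    (hE : ∀ v, E v = A v ∩ {ω | ∀ w ∈ C, w ≠ v → ∑ i, w i * X ω i ≤ t}
        ∩ {ω | ∀ w ∈ C, w ≠ v → χ w = χ v → ∑ i, w i * Y ω i ≤ s}) :
    (∀ v ∈ C, ∀ w ∈ C, v ≠ w → Disjoint (E v) (E w)) ∧
    (1 / 2) * ∑ v ∈ C, (P (A v)).toReal ≤ (P (⋃ v ∈ C, E v)).toReal ∧
    (1 / 2) * C.card * (C.inf' hC fun v => (P (A v)).toReal) ≤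
      (1 / 2) * ∑ v ∈ C, (P (A v)).toReal :=
  template_agreement_general P n X Y hXm hYm C hC t s c χ hχ A E hA hTA hTB hE
end

section
/- (Binomial tail upper bound in terms of the Gaussian tail.) There exists a constant C > 0 such that for every integer n ≥ 1 and every real u ≥ 0, if X is uniformly distributed on {0,1}^n then P(|wt(X) − n/2| ≥ u·√n/2) ≤ C·n²·Q(u). -/
open MeasureTheory ProbabilityTheory Real
open scoped Classical

/-- Hamming weight of a binary string. -/
def wt {n : ℕ} (x : Fin n → Bool) : ℕ := (Finset.univ.filter fun i => x i = true).card

/-! Hoeffding's inequality bounds the fraction of strings with `|wt x - n/2| ≥ u√n/2` by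
`2 exp (-u²/2)`. Conversely the Gaussian density on `[u, u + 1/(u+1)]` is at least a constant
times `exp (-u²/2)`, so `exp (-u²/2) ≤ √(2π) e^{3/2} (u + 1) Q(u)`. This settles `u ≤ √n`, where
`u + 1 ≤ 2n²`; for `u > √n` the event is empty because `|wt x - n/2| ≤ n/2`. -/

open Finset

lemma wt_le {n : ℕ} (x : Fin n → Bool) : wt x ≤ n :=
  (card_filter_le _ _).trans_eq (card_fin n)

lemma abs_wt_sub_half_le {n : ℕ} (x : Fin n → Bool) : |(wt x : ℝ) - n / 2| ≤ n / 2 := by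
  have : (wt x : ℝ) ≤ n := by exact_mod_cast wt_le x
  rw [abs_le]
  constructor <;> linarith [(wt x).cast_nonneg (α := ℝ)]

lemma filter_le_abs_wt_sub_eq_empty {n : ℕ} {t : ℝ} (ht : n / 2 < t) :
    (univ.filter fun x : Fin n → Bool => t ≤ |(wt x : ℝ) - n / 2|) = ∅ :=
  filter_eq_empty_iff.2 fun x _ => not_le.2 ((abs_wt_sub_half_le x).trans_lt ht)

lemma wt_sub_half_eq_sum {n : ℕ} (x : Fin n → Bool) :
    (wt x : ℝ) - n / 2 = ∑ i, ((if x i then 1 else 0) - 1 / 2 : ℝ) := by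
  rw [sum_sub_distrib, sum_boole, wt]
  simp [div_eq_mul_inv]

lemma sum_exp_mul_wt_sub (n : ℕ) (s : ℝ) :
    ∑ x : Fin n → Bool, exp (s * ((wt x : ℝ) - n / 2)) = (2 * cosh (s / 2)) ^ n := by
  simp_rw [wt_sub_half_eq_sum, mul_sum, exp_sum]
  rw [← Fintype.prod_sum fun _ (b : Bool) => exp (s * ((if b = true then 1 else 0) - 1 / 2))]
  simp [cosh_eq]
  ring_nf

lemma sum_exp_mul_wt_sub_le (n : ℕ) (s : ℝ) :
    ∑ x : Fin n → Bool, exp (s * ((wt x : ℝ) - n / 2)) ≤ 2 ^ n * exp (n * s ^ 2 / 8) := by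
  rw [sum_exp_mul_wt_sub]
  calc (2 * cosh (s / 2)) ^ n ≤ (2 * exp ((s / 2) ^ 2 / 2)) ^ n := by
        gcongr; exact cosh_le_exp_half_sq _
    _ = 2 ^ n * exp (n * s ^ 2 / 8) := by rw [mul_pow, ← exp_nat_mul]; ring_nf

lemma card_le_abs_wt_sub_le_chernoff (n : ℕ) {s : ℝ} (hs : 0 ≤ s) (t : ℝ) :
    (#{x : Fin n → Bool | t ≤ |(wt x : ℝ) - n / 2|} : ℝ) ≤
      2 * 2 ^ n * exp (n * s ^ 2 / 8 - s * t) := by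
  rw [exp_sub, mul_div_assoc', le_div_iff₀ (exp_pos _)]
  calc (#{x : Fin n → Bool | t ≤ |(wt x : ℝ) - n / 2|} : ℝ) * exp (s * t)
      = ∑ x with t ≤ |(wt x : ℝ) - n / 2|, exp (s * t) := by rw [sum_const, nsmul_eq_mul]
    _ ≤ ∑ x with t ≤ |(wt x : ℝ) - n / 2|, exp |s * ((wt x : ℝ) - n / 2)| := by
        gcongr with x hx
        rw [abs_mul, abs_of_nonneg hs]
        exact mul_le_mul_of_nonneg_left (mem_filter.1 hx).2 hs
    _ ≤ ∑ x : Fin n → Bool, exp |s * ((wt x : ℝ) - n / 2)| :=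
        sum_le_sum_of_subset_of_nonneg (subset_univ _) fun _ _ _ => (exp_pos _).le
    _ ≤ ∑ x : Fin n → Bool, (exp (s * ((wt x : ℝ) - n / 2)) + exp (-s * ((wt x : ℝ) - n / 2))) :=
        sum_le_sum fun x _ => by rw [neg_mul]; exact exp_abs_le _
    _ ≤ 2 * 2 ^ n * exp (n * s ^ 2 / 8) := by
        rw [sum_add_distrib]
        linarith [sum_exp_mul_wt_sub_le n s, neg_sq s ▸ sum_exp_mul_wt_sub_le n (-s)]

lemma card_le_abs_wt_sub_le_hoeffding (n : ℕ) {t : ℝ} (ht : 0 ≤ t) :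
    (#{x : Fin n → Bool | t ≤ |(wt x : ℝ) - n / 2|} : ℝ) ≤ 2 * 2 ^ n * exp (-2 * t ^ 2 / n) := by
  -- `s = 4t/n` minimises the exponent; for `n = 0` both sides degenerate to `exp 0`.
  convert card_le_abs_wt_sub_le_chernoff n (s := 4 * t / n) (by positivity) t using 3
  rcases eq_or_ne (n : ℝ) 0 with hn | hn
  · simp [hn]
  · field_simp; ring

lemma Q_nonneg (t : ℝ) : 0 ≤ Q t := ENNReal.toReal_nonneg

lemma Q_eq_integral_s11 (u : ℝ) : Q u = ∫ x in Set.Ioi u, gaussianPDFReal 0 1 x := by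
  rw [Q, gaussianReal_apply_eq_integral 0 one_ne_zero, ENNReal.toReal_ofReal
    (setIntegral_nonneg measurableSet_Ioi fun x _ => gaussianPDFReal_nonneg 0 1 x)]

lemma gaussianPDFReal_le_of_le {x y : ℝ} (hx : 0 ≤ x) (hxy : x ≤ y) :
    gaussianPDFReal 0 1 y ≤ gaussianPDFReal 0 1 x := by
  simp only [gaussianPDFReal, NNReal.coe_one, mul_one, sub_zero]
  gcongr

lemma mul_gaussianPDFReal_le_Q {u δ : ℝ} (hu : 0 ≤ u) (hδ : 0 ≤ δ) :
    δ * gaussianPDFReal 0 1 (u + δ) ≤ Q u := by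
  have hint := (integrable_gaussianPDFReal 0 1).integrableOn (s := Set.Ioc u (u + δ))
  calc δ * gaussianPDFReal 0 1 (u + δ) = ∫ _ in Set.Ioc u (u + δ), gaussianPDFReal 0 1 (u + δ) := by
        simp [Real.volume_real_Ioc_of_le (le_add_of_nonneg_right hδ)]
    _ ≤ ∫ x in Set.Ioc u (u + δ), gaussianPDFReal 0 1 x :=
        setIntegral_mono_on (integrableOn_const (by simp)) hint measurableSet_Ioc
          fun x hx => gaussianPDFReal_le_of_le (hu.trans hx.1.le) hx.2
    _ ≤ Q u := by
        rw [Q_eq_integral_s11]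
        exact setIntegral_mono_set (integrable_gaussianPDFReal 0 1).integrableOn
          (ae_of_all _ (gaussianPDFReal_nonneg 0 1)) Set.Ioc_subset_Ioi_self.eventuallyLE

lemma exp_neg_sq_div_two_le_mul_Q {u : ℝ} (hu : 0 ≤ u) :
    exp (-u ^ 2 / 2) ≤ √(2 * π) * exp (3 / 2) * (u + 1) * Q u := by
  set δ := (u + 1)⁻¹
  have hδ : (u + 1) * δ = 1 := mul_inv_cancel₀ (by positivity)
  have hδ1 : δ ≤ 1 := inv_le_one_of_one_le₀ (by linarith)
  have hsq : (u + δ) ^ 2 ≤ u ^ 2 + 3 := by nlinarith [inv_nonneg.2 (by linarith : 0 ≤ u + 1)]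
  have hpdf : gaussianPDFReal 0 1 (u + δ) = (√(2 * π))⁻¹ * exp (-(u + δ) ^ 2 / 2) := by
    simp [gaussianPDFReal]
  calc exp (-u ^ 2 / 2) = √(2 * π) * exp (3 / 2) * ((u + 1) * δ) *
        ((√(2 * π))⁻¹ * exp (-(u ^ 2 + 3) / 2)) := by
        have : √(2 * π) ≠ 0 := by positivity
        rw [hδ, mul_one, mul_mul_mul_comm, mul_inv_cancel₀ this, one_mul, ← exp_add]
        ring_nf
    _ ≤ √(2 * π) * exp (3 / 2) * (u + 1) * (δ * gaussianPDFReal 0 1 (u + δ)) := by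
        rw [hpdf, ← mul_assoc _ δ, ← mul_assoc _ (u + 1)]
        gcongr
    _ ≤ √(2 * π) * exp (3 / 2) * (u + 1) * Q u := by
        gcongr
        exact mul_gaussianPDFReal_le_Q hu (by positivity)

theorem binomial_tail_upper_bound :
    ∃ C : ℝ, 0 < C ∧ ∀ n : ℕ, 1 ≤ n → ∀ u : ℝ, 0 ≤ u →
      ((Finset.univ.filter fun x : Fin n → Bool =>
          u * Real.sqrt n / 2 ≤ |(wt x : ℝ) - n / 2|).card : ℝ) / 2 ^ n ≤
        C * n ^ 2 * Q u := by
  refine ⟨4 * (√(2 * π) * exp (3 / 2)), by positivity, fun n hn u hu => ?_⟩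
  have hn1 : (1 : ℝ) ≤ n := by exact_mod_cast hn
  have hQ := Q_nonneg u
  rcases le_or_gt u √n with hu_le | hu_gt
  · have hun : u + 1 ≤ 2 * (n : ℝ) ^ 2 := by nlinarith [sqrt_le_self_iff.2 (Or.inr hn1)]
    have hexp : -2 * (u * √n / 2) ^ 2 / n = -u ^ 2 / 2 := by
      rw [div_pow, mul_pow, sq_sqrt (by positivity)]
      field_simp
    calc _ ≤ 2 * exp (-u ^ 2 / 2) := by
          rw [div_le_iff₀ (by positivity), ← hexp, mul_right_comm]
          exact card_le_abs_wt_sub_le_hoeffding n (by positivity)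
      _ ≤ 2 * (√(2 * π) * exp (3 / 2) * (u + 1) * Q u) := by
          gcongr; exact exp_neg_sq_div_two_le_mul_Q hu
      _ ≤ 4 * (√(2 * π) * exp (3 / 2)) * n ^ 2 * Q u := by
          have : 0 ≤ √(2 * π) * exp (3 / 2) * Q u := by positivity
          nlinarith
  · have : (n : ℝ) / 2 < u * √n / 2 := by
      nlinarith [mul_self_sqrt (n.cast_nonneg (α := ℝ)), sqrt_pos.2 (by positivity : (0 : ℝ) < n)]
    rw [filter_le_abs_wt_sub_eq_empty this, card_empty, Nat.cast_zero, zero_div]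
    positivity
end

section
/- (Point probability lower bound for biased binomials.) For every ε ∈ (0, 1/2] there exist constants c > 0 and δ > 0 such that for every integer m ≥ 1 and every real α > 0 with α³·m ≤ δ the following holds: if (ε+α)·m is an integer ℓ with 0 ≤ ℓ ≤ m, then P(Bin(m,ε) = ℓ) ≥ (c/√m)·e^{−m·α²/(2·ε·(1−ε))}; and if (ε−α)·m is a nonnegative integer ℓ', then P(Bin(m,ε) = ℓ') ≥ (c/√m)·e^{−m·α²/(2·ε·(1−ε))}. -/
/-!
Write `ℓ = (ε + s) m`. Stirling's bounds `√(2πn) (n/e)^n ≤ n! ≤ e √n (n/e)^n` give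
`C(m, ℓ) ε^ℓ (1-ε)^(m-ℓ) ≥ 2√(2π) / (e² √m) · exp (-m D)`, where
`D = ε klFun (1 + s/ε) + (1-ε) klFun (1 - s/(1-ε))` is the relative entropy of
Bernoulli(ε + s) with respect to Bernoulli(ε). Expanding `log (1 + x)` to third order gives
`D ≤ s² / (2ε(1-ε)) + 8|s|³/ε²`, and once `α³ m ≤ ε³/8` the cubic term costs at most a factor `e⁻¹`.
-/

open Real InformationTheory
open scoped Nat

theorem factorial_le_exp_one_mul_sqrt_mul_pow {n : ℕ} (hn : n ≠ 0) :
    (n ! : ℝ) ≤ exp 1 * √n * (n / exp 1) ^ n := by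
  have hseq : Stirling.stirlingSeq n ≤ exp 1 / √2 := by
    obtain ⟨k, rfl⟩ := Nat.exists_eq_add_of_le' (Nat.one_le_iff_ne_zero.2 hn)
    simpa using Stirling.stirlingSeq'_antitone (Nat.zero_le k)
  have hpos : 0 < √(2 * n : ℝ) * (n / exp 1) ^ n := by
    have : (0 : ℝ) < n := by exact_mod_cast Nat.pos_of_ne_zero hn
    positivity
  rw [Stirling.stirlingSeq, div_le_iff₀ hpos, sqrt_mul zero_le_two] at hseq
  calc (n ! : ℝ) ≤ exp 1 / √2 * (√2 * √n * (n / exp 1) ^ n) := hseq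
    _ = exp 1 * √n * (n / exp 1) ^ n := by field_simp

theorem log_one_add_le_cubic {x : ℝ} (hx : |x| ≤ 1 / 2) :
    log (1 + x) ≤ x - x ^ 2 / 2 + 2 * |x| ^ 3 := by
  have htaylor := (le_abs_self _).trans
    (abs_log_sub_add_sum_range_le (x := -x) (by rw [abs_neg]; linarith) 2)
  have hden : |x| ^ 3 / (1 - |x|) ≤ 2 * |x| ^ 3 := by
    rw [div_le_iff₀ (by linarith)]; nlinarith [pow_nonneg (abs_nonneg x) 3]
  norm_num [Finset.sum_range_succ] at htaylor
  linarith

theorem klFun_one_add_le {x : ℝ} (hx : |x| ≤ 1 / 2) :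
    klFun (1 + x) ≤ x ^ 2 / 2 + 4 * |x| ^ 3 := by
  have hx' := abs_le.1 hx
  have hcube : -x ^ 3 ≤ |x| ^ 3 := abs_pow x 3 ▸ neg_le_abs _
  have hlog := mul_le_mul_of_nonneg_left (log_one_add_le_cubic hx) (by linarith : 0 ≤ 1 + x)
  rw [klFun_apply]
  nlinarith [pow_nonneg (abs_nonneg x) 3]

theorem mul_klFun_add_mul_klFun_le {p s : ℝ} (hp : 0 < p) (hp2 : p ≤ 1 / 2) (hs : |s| ≤ p / 2) :
    p * klFun (1 + s / p) + (1 - p) * klFun (1 - s / (1 - p)) ≤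
      s ^ 2 / (2 * p * (1 - p)) + 8 * |s| ^ 3 / p ^ 2 := by
  have hq : 0 < 1 - p := by linarith
  have h₁ := klFun_one_add_le (x := s / p) (by rw [abs_div, abs_of_pos hp, div_le_iff₀ hp]; linarith)
  have h₂ := klFun_one_add_le (x := -(s / (1 - p)))
    (by rw [abs_neg, abs_div, abs_of_pos hq, div_le_iff₀ hq]; linarith)
  rw [← sub_eq_add_neg] at h₂
  have hcube : |s| ^ 3 / (1 - p) ^ 2 ≤ |s| ^ 3 / p ^ 2 := by gcongr; linarith
  calc p * klFun (1 + s / p) + (1 - p) * klFun (1 - s / (1 - p))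
      ≤ p * ((s / p) ^ 2 / 2 + 4 * |s / p| ^ 3)
        + (1 - p) * ((-(s / (1 - p))) ^ 2 / 2 + 4 * |-(s / (1 - p))| ^ 3) := by gcongr
    _ = s ^ 2 / (2 * p * (1 - p)) + 4 * |s| ^ 3 / p ^ 2 + 4 * (|s| ^ 3 / (1 - p) ^ 2) := by
      rw [abs_neg, abs_div, abs_div, abs_of_pos hp, abs_of_pos hq]
      field_simp
      ring
    _ ≤ s ^ 2 / (2 * p * (1 - p)) + 8 * |s| ^ 3 / p ^ 2 := by
      linarith [show 8 * |s| ^ 3 / p ^ 2 = 4 * |s| ^ 3 / p ^ 2 + 4 * (|s| ^ 3 / p ^ 2) by ring]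

theorem div_pow_mul_div_pow_eq_exp_klFun {p n : ℝ} (hp : 0 < p) (hp1 : p < 1) {k j : ℕ}
    (hk : k ≠ 0) (hj : j ≠ 0) (hn : (k + j : ℝ) = n) :
    (n * p / k) ^ k * (n * (1 - p) / j) ^ j =
      exp (-(n * (p * klFun (k / (n * p)) + (1 - p) * klFun (j / (n * (1 - p)))))) := by
  have hk' : (0 : ℝ) < k := by positivity
  have hj' : (0 : ℝ) < j := by positivity
  have hn' : 0 < n := hn ▸ by positivity
  have hq : 0 < 1 - p := by linarith
  have pow_eq_exp (a : ℝ) (ha : 0 < a) (i : ℕ) : a ^ i = exp (-(i * log a⁻¹)) := by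
    rw [log_inv, mul_neg, neg_neg, ← log_pow, exp_log (pow_pos ha i)]
  rw [pow_eq_exp _ (by positivity), pow_eq_exp _ (by positivity), ← exp_add, inv_div, inv_div]
  congr 1
  simp only [klFun_apply]
  field_simp
  linear_combination -hn

theorem stirling_le_cast_add_choose {k j : ℕ} (hk : k ≠ 0) (hj : j ≠ 0) :
    2 * √(2 * π) / (exp 1 ^ 2 * √(k + j : ℝ)) * ((k + j : ℝ) ^ (k + j) / (k ^ k * j ^ j)) ≤
      ((k + j).choose k : ℝ) := by
  have hk' : (0 : ℝ) < k := by positivity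
  have hj' : (0 : ℝ) < j := by positivity
  set n : ℝ := k + j with hn
  have hprefactor : 2 * √(2 * π) / (exp 1 ^ 2 * √n) ≤ √(2 * π * n) / (exp 1 ^ 2 * √(k * j)) := by
    rw [div_le_div_iff₀ (by positivity) (by positivity), sqrt_mul (by positivity) n]
    have hn2 : √n * √n = n := mul_self_sqrt (by positivity)
    have hamgm : √(k * j : ℝ) ≤ n / 2 := by
      rw [sqrt_le_left (by positivity)]
      nlinarith [sq_nonneg ((k : ℝ) - j)]
    have : 0 < √(2 * π) * exp 1 ^ 2 := by positivity
    nlinarith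
  calc 2 * √(2 * π) / (exp 1 ^ 2 * √n) * (n ^ (k + j) / (k ^ k * j ^ j))
      ≤ √(2 * π * n) / (exp 1 ^ 2 * √(k * j)) * (n ^ (k + j) / (k ^ k * j ^ j)) := by gcongr
    _ = √(2 * π * n) * (n / exp 1) ^ (k + j) /
          ((exp 1 * √k * (k / exp 1) ^ k) * (exp 1 * √j * (j / exp 1) ^ j)) := by
      rw [sqrt_mul hk'.le]
      field_simp
      ring_nf
    _ ≤ (k + j)! / (k ! * j !) := by
      gcongr
      · simpa [hn] using Stirling.le_factorial_stirling (k + j)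
      · exact factorial_le_exp_one_mul_sqrt_mul_pow hk
      · exact factorial_le_exp_one_mul_sqrt_mul_pow hj
    _ = ((k + j).choose k : ℝ) := (Nat.cast_add_choose ℝ).symm

theorem le_choose_mul_pow_mul_pow {p s : ℝ} (hp : 0 < p) (hp2 : p ≤ 1 / 2) (hs : |s| ≤ p / 2)
    {m ℓ : ℕ} (hm : m ≠ 0) (hℓ : (p + s) * m = ℓ) :
    2 * √(2 * π) / exp 1 ^ 2 / √m *
        exp (-(m * s ^ 2) / (2 * p * (1 - p)) - 8 * m * |s| ^ 3 / p ^ 2) ≤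
      m.choose ℓ * p ^ ℓ * (1 - p) ^ (m - ℓ) := by
  have hs' := abs_le.1 hs
  have hm' : (0 : ℝ) < m := by positivity
  have hℓ0 : ℓ ≠ 0 := by
    rintro rfl
    have : 0 < (p + s) * m := mul_pos (by linarith) hm'
    simp_all
  have hℓm : ℓ < m := by
    have : (ℓ : ℝ) < m := by rw [← hℓ]; nlinarith
    exact_mod_cast this
  obtain ⟨j, rfl⟩ := Nat.exists_eq_add_of_le hℓm.le
  have hj : j ≠ 0 := by omega
  rw [Nat.add_sub_cancel_left]
  push_cast at hℓ hm' ⊢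
  set n : ℝ := ℓ + j with hn
  have hx : ℓ / (n * p) = 1 + s / p := by
    rw [← hℓ]; field_simp
  have hy : j / (n * (1 - p)) = 1 - s / (1 - p) := by
    have hjn : (j : ℝ) = (1 - p - s) * n := by linarith
    have hq : 1 - p ≠ 0 := by linarith
    rw [hjn]; field_simp
  have hkl := mul_le_mul_of_nonneg_left (mul_klFun_add_mul_klFun_le hp hp2 hs) hm'.le
  calc 2 * √(2 * π) / exp 1 ^ 2 / √n *
        exp (-(n * s ^ 2) / (2 * p * (1 - p)) - 8 * n * |s| ^ 3 / p ^ 2)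
    _ ≤ 2 * √(2 * π) / (exp 1 ^ 2 * √n) *
        exp (-(n * (p * klFun (ℓ / (n * p)) + (1 - p) * klFun (j / (n * (1 - p)))))) := by
      rw [div_div, hx, hy]
      gcongr
      linarith [show -(n * s ^ 2) / (2 * p * (1 - p)) - 8 * n * |s| ^ 3 / p ^ 2 =
        -(n * (s ^ 2 / (2 * p * (1 - p)) + 8 * |s| ^ 3 / p ^ 2)) by ring]
    _ = 2 * √(2 * π) / (exp 1 ^ 2 * √n) * ((n * p / ℓ) ^ ℓ * (n * (1 - p) / j) ^ j) := by
      rw [div_pow_mul_div_pow_eq_exp_klFun hp (by linarith) hℓ0 hj rfl]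
    _ = 2 * √(2 * π) / (exp 1 ^ 2 * √n) * (n ^ (ℓ + j) / (ℓ ^ ℓ * j ^ j)) * p ^ ℓ * (1 - p) ^ j := by
      rw [div_pow, div_pow, mul_pow, mul_pow, pow_add]
      ring
    _ ≤ (ℓ + j).choose ℓ * p ^ ℓ * (1 - p) ^ j := by
      gcongr
      · exact pow_nonneg (by linarith) j
      · simpa [hn] using stirling_le_cast_add_choose hℓ0 hj

theorem biased_binomial_point_lower_bound (ε : ℝ) (hε0 : 0 < ε) (hε1 : ε ≤ 1 / 2) :
    ∃ c δ : ℝ, 0 < c ∧ 0 < δ ∧ ∀ m : ℕ, 1 ≤ m → ∀ α : ℝ, 0 < α → α ^ 3 * m ≤ δ →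
      (∀ ℓ : ℕ, ℓ ≤ m → (ε + α) * m = ℓ →
        c / Real.sqrt m * Real.exp (-(m * α ^ 2) / (2 * ε * (1 - ε))) ≤
          (m.choose ℓ : ℝ) * ε ^ ℓ * (1 - ε) ^ (m - ℓ)) ∧
      (∀ ℓ' : ℕ, (ε - α) * m = ℓ' →
        c / Real.sqrt m * Real.exp (-(m * α ^ 2) / (2 * ε * (1 - ε))) ≤
          (m.choose ℓ' : ℝ) * ε ^ ℓ' * (1 - ε) ^ (m - ℓ')) := by
  refine ⟨2 * √(2 * π) / exp 1 ^ 2 * exp (-1), ε ^ 3 / 8, by positivity, by positivity,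
    fun m hm α hα hαδ => ?_⟩
  have hm' : (1 : ℝ) ≤ m := by exact_mod_cast hm
  have hα_le : α ≤ ε / 2 := by
    refine le_of_pow_le_pow_left₀ three_ne_zero (by positivity) ?_
    nlinarith [pow_pos hα 3]
  have hcubic : 8 * m * α ^ 3 / ε ^ 2 ≤ 1 := by
    rw [div_le_one (by positivity)]
    nlinarith
  have of_abs_eq {s : ℝ} (hs : |s| = α) (ℓ : ℕ) (hℓ : (ε + s) * m = ℓ) :
      2 * √(2 * π) / exp 1 ^ 2 * exp (-1) / √m * exp (-(m * α ^ 2) / (2 * ε * (1 - ε))) ≤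
        m.choose ℓ * ε ^ ℓ * (1 - ε) ^ (m - ℓ) := by
    refine le_trans ?_ (le_choose_mul_pow_mul_pow hε0 hε1 (hs ▸ hα_le) (by omega) hℓ)
    rw [← sq_abs s, hs, mul_div_right_comm _ (exp (-1)), mul_assoc, ← exp_add]
    gcongr
    linarith
  exact ⟨fun ℓ _ hℓ => of_abs_eq (abs_of_pos hα) ℓ hℓ,
    fun ℓ' hℓ' => of_abs_eq (by rw [abs_neg, abs_of_pos hα]) ℓ' (by rwa [← sub_eq_add_neg])⟩
end

section
/- (Unimodality criterion for products of binomial coefficients.) Let M₁, M₂, L, a be natural numbers with 1 ≤ a ≤ L. If a·(M₁ + M₂ + 2) ≤ (M₁ + 1)·(L + 1), then C(M₁, a−1)·C(M₂, L−a+1) ≤ C(M₁, a)·C(M₂, L−a). -/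
namespace Nat

/-- Exchanging one unit between the two lower indices: by `choose_succ_right_eq` both sides
scaled by `(b + 1) * (c + 1)` share the factor `n.choose b * m.choose c`, leaving
`(b + 1) * (m - c) ≤ (n - b) * (c + 1)`. -/
theorem choose_mul_choose_succ_le_of_mul_le {n m b c : ℕ}
    (h : (b + 1) * (m + 1) ≤ (n + 1) * (c + 1)) :
    n.choose b * m.choose (c + 1) ≤ n.choose (b + 1) * m.choose c := by
  have key : (b + 1) * (m - c) ≤ (n - b) * (c + 1) := by
    rcases le_or_gt m c with hmc | hcm
    · simp [Nat.sub_eq_zero_of_le hmc]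
    have hbn : b ≤ n := by nlinarith
    zify [hbn, hcm.le]
    linarith
  refine le_of_mul_le_mul_right (a := (b + 1) * (c + 1)) ?_ (by positivity)
  calc n.choose b * m.choose (c + 1) * ((b + 1) * (c + 1))
      = n.choose b * m.choose c * ((b + 1) * (m - c)) := by
        linear_combination n.choose b * (b + 1) * choose_succ_right_eq m c
    _ ≤ n.choose b * m.choose c * ((n - b) * (c + 1)) := by gcongr
    _ = n.choose (b + 1) * m.choose c * ((b + 1) * (c + 1)) := by
        linear_combination m.choose c * (c + 1) * (choose_succ_right_eq n b).symm

end Nat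

theorem choose_product_unimodal_general (M₁ M₂ L a : ℕ) (ha1 : 1 ≤ a)
    (h : a * (M₁ + M₂ + 2) ≤ (M₁ + 1) * (L + 1)) :
    M₁.choose (a - 1) * M₂.choose (L - a + 1) ≤ M₁.choose a * M₂.choose (L - a) := by
  obtain ⟨b, rfl⟩ : ∃ b, a = b + 1 := ⟨a - 1, by omega⟩
  rw [Nat.add_sub_cancel]
  apply Nat.choose_mul_choose_succ_le_of_mul_le
  have hL : L + 1 ≤ (b + 1) + (L - (b + 1) + 1) := by omega
  nlinarith

theorem choose_product_unimodal (M₁ M₂ L a : ℕ) (ha1 : 1 ≤ a) (haL : a ≤ L)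
    (h : a * (M₁ + M₂ + 2) ≤ (M₁ + 1) * (L + 1)) :
    M₁.choose (a - 1) * M₂.choose (L - a + 1) ≤ M₁.choose a * M₂.choose (L - a) :=
  choose_product_unimodal_general M₁ M₂ L a ha1 h
end

section
/- (Comparison of LSH exponents: the common-randomness-based hash family strictly improves on the trivial one.) The function g : [0,1) → ℝ defined by g(ρ) = ((1+ρ)/(1−ρ)) · log₂(2/(1+ρ)) is strictly increasing on [0,1); equivalently, for all 0 ≤ ρ' < ρ < 1, log₂(2/(1+ρ)) / log₂(2/(1+ρ')) > ((1−ρ)/(1+ρ)) / ((1−ρ')/(1+ρ')). -/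
/-!
Substituting `x = 2 / (1 + ρ)`, a decreasing map of `[0, 1)` onto `(1, 2]`, turns
`(1 + ρ) / (1 - ρ) * log₂ (2 / (1 + ρ))` into `log₂ x / (x - 1)`: the slope of the secant of the
strictly concave function `log₂` between `1` and `x`, which strictly decreases in `x`.
-/

open Real Set

theorem strictAntiOn_log_div_sub_one : StrictAntiOn (fun x : ℝ => log x / (x - 1)) (Ioi 1) := by
  intro x hx y hy hxy
  have h := strictConcaveOn_log_Ioi.secant_strict_mono (mem_Ioi.mpr one_pos)
    (mem_Ioi.mpr (one_pos.trans hx)) (mem_Ioi.mpr (one_pos.trans hy)) hx.ne' hy.ne' hxy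
  simpa only [log_one, sub_zero] using h

theorem strictAntiOn_logb_div_sub_one {b : ℝ} (hb : 1 < b) :
    StrictAntiOn (fun x : ℝ => logb b x / (x - 1)) (Ioi 1) := by
  intro x hx y hy hxy
  simp only [logb, div_right_comm _ (log b)]
  exact div_lt_div_of_pos_right (strictAntiOn_log_div_sub_one hx hy hxy) (log_pos hb)

theorem strictAntiOn_two_div_one_add : StrictAntiOn (fun ρ : ℝ => 2 / (1 + ρ)) (Ioi (-1)) := by
  intro x hx y hy hxy
  have hx' : 0 < 1 + x := by linarith [mem_Ioi.mp hx]
  exact div_lt_div_of_pos_left two_pos hx' (by linarith)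

theorem mapsTo_two_div_one_add : MapsTo (fun ρ : ℝ => 2 / (1 + ρ)) (Ico 0 1) (Ioi 1) := by
  rintro ρ ⟨h0, h1⟩
  rw [mem_Ioi, one_lt_div (by linarith)]
  linarith

theorem one_add_div_one_sub_eq_inv {ρ : ℝ} (hρ : 1 + ρ ≠ 0) :
    (1 + ρ) / (1 - ρ) = (2 / (1 + ρ) - 1)⁻¹ := by
  rw [div_sub_one hρ, inv_div]
  ring_nf

theorem lsh_exponent_comparison :
    StrictMonoOn (fun ρ : ℝ => ((1 + ρ) / (1 - ρ)) * Real.logb 2 (2 / (1 + ρ)))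
      (Set.Ico (0 : ℝ) 1) := by
  have hsub : Ico (0 : ℝ) 1 ⊆ Ioi (-1) :=
    Ico_subset_Ici_self.trans (Ici_subset_Ioi.mpr (by norm_num))
  have hsecant := (strictAntiOn_logb_div_sub_one one_lt_two).comp
    (strictAntiOn_two_div_one_add.mono hsub) mapsTo_two_div_one_add
  refine hsecant.congr fun ρ hρ => ?_
  have hρ' : 1 + ρ ≠ 0 := (neg_lt_iff_pos_add'.mp (hsub hρ)).ne'
  simp only [Function.comp_apply]
  rw [one_add_div_one_sub_eq_inv hρ', div_eq_inv_mul]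
end
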